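/- arXiv:1904.09216 — 2 statements merged into one kernel-verified Lean document; each statement's English description precedes it below -/
import Mathlib

section
/- Let F : [0,1]^n → ℝ_{≥0} be a monotone one-sided σ-smooth C² function all of whose third-order partial derivatives are non-positive, let α ∈ [0,1), and let P ⊆ [0,1]^n be a downward-closed compact convex polytope. Let v* ∈ argmax_{x∈P} ‖x‖₁ and OPT = max_{x∈P} F(x). Suppose x : [0,1] → ℝ^n is a differentiable curve with x(0) = α·v* and x'(t) = (1−α)·v(t) for all t, where v(t) ∈ argmax_{v∈P} vᵀ∇F(x(t)). Then x(1) ∈ P and F(x(1)) ≥ (1 − exp(−α(1−α)/(α+σ)))·OPT; in particular for α = 1/2, F(x(1)) ≥ (1 − exp(−1/(4σ+2)))·OPT ≥ OPT/(4σ+3). -/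
open scoped BigOperators

/-- The gradient of `F` at `x`: vector of partial derivatives. -/
noncomputable def grad {n : ℕ} (F : (Fin n → ℝ) → ℝ) (x : Fin n → ℝ) : Fin n → ℝ :=
  fun i => fderiv ℝ F x (Pi.single i 1)

/-- The Hessian of `F` at `x`: matrix of second partial derivatives. -/
noncomputable def hess {n : ℕ} (F : (Fin n → ℝ) → ℝ) (x : Fin n → ℝ) : Fin n → Fin n → ℝ :=
  fun i j => fderiv ℝ (fun y => grad F y i) x (Pi.single j 1)

/-- Euclidean dot product `uᵀ v`. -/
noncomputable def dotp {n : ℕ} (u v : Fin n → ℝ) : ℝ := ∑ i, u i * v i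

/-- The ℓ¹ norm `‖x‖₁`. -/
noncomputable def l1 {n : ℕ} (x : Fin n → ℝ) : ℝ := ∑ i, |x i|

/-- The quadratic form `uᵀ H u`. -/
noncomputable def quadForm {n : ℕ} (H : Fin n → Fin n → ℝ) (u : Fin n → ℝ) : ℝ :=
  ∑ i, ∑ j, u i * H i j * u j

/-- The unit box `[0,1]^n`. -/
def box (n : ℕ) : Set (Fin n → ℝ) := Set.Icc 0 1

/-- `F` is one-sided σ-smooth at `x`:
`(1/2)·uᵀ∇²F(x)u ≤ σ·(‖u‖₁/‖x‖₁)·uᵀ∇F(x)` for all `u ≥ 0`. -/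
def OSSAt {n : ℕ} (σ : ℝ) (F : (Fin n → ℝ) → ℝ) (x : Fin n → ℝ) : Prop :=
  ∀ u : Fin n → ℝ, 0 ≤ u →
    (1 / 2 : ℝ) * quadForm (hess F x) u ≤ σ * (l1 u / l1 x) * dotp u (grad F x)

lemma clm_eq_sum {n : ℕ} (f : (Fin n → ℝ) →L[ℝ] ℝ) (u : Fin n → ℝ) :
    f u = ∑ i, u i * f (Pi.single i 1) := by
  conv_lhs => rw [← Finset.univ_sum_single u, map_sum]
  refine Finset.sum_congr rfl fun i _ => ?_
  have h : Pi.single i (u i) = u i • (Pi.single i 1 : Fin n → ℝ) := by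
    ext j; by_cases hj : j = i <;> simp [Pi.single_apply, hj]
  rw [h, map_smul, smul_eq_mul]

lemma hasDerivAt_line {n : ℕ} (y u : Fin n → ℝ) (s : ℝ) :
    HasDerivAt (fun s : ℝ => y + s • u) u s := by
  simpa using ((hasDerivAt_id s).smul_const u).const_add y

lemma hasDerivAt_comp_line {n : ℕ} {G : (Fin n → ℝ) → ℝ} (hG : Differentiable ℝ G)
    (y u : Fin n → ℝ) (s : ℝ) :
    HasDerivAt (fun s : ℝ => G (y + s • u)) (fderiv ℝ G (y + s • u) u) s :=
  ((hG (y + s • u)).hasFDerivAt).comp_hasDerivAt s (hasDerivAt_line y u s)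

section F
variable {n : ℕ} {F : (Fin n → ℝ) → ℝ}

lemma gradC2 (hF : ContDiff ℝ 3 F) (i : Fin n) : ContDiff ℝ 2 (fun y => grad F y i) :=
  (hF.fderiv_right (by norm_num)).clm_apply contDiff_const

lemma hessC1 (hF : ContDiff ℝ 3 F) (i j : Fin n) : ContDiff ℝ 1 (fun y => hess F y i j) :=
  (((gradC2 hF i).fderiv_right (by norm_num))).clm_apply contDiff_const

lemma hasDerivAt_F_line (hF : ContDiff ℝ 3 F) (y u : Fin n → ℝ) (s : ℝ) :
    HasDerivAt (fun s : ℝ => F (y + s • u)) (dotp u (grad F (y + s • u))) s := by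
  have h := hasDerivAt_comp_line (hF.differentiable (by norm_num)) y u s
  rwa [clm_eq_sum] at h

lemma hasDerivAt_grad_line (hF : ContDiff ℝ 3 F) (y u : Fin n → ℝ) (i : Fin n) (s : ℝ) :
    HasDerivAt (fun s : ℝ => grad F (y + s • u) i)
      (∑ j, u j * hess F (y + s • u) i j) s := by
  have h := hasDerivAt_comp_line ((gradC2 hF i).differentiable (by norm_num)) y u s
  rwa [clm_eq_sum] at h

lemma hasDerivAt_hess_line (hF : ContDiff ℝ 3 F) (y u : Fin n → ℝ) (i j : Fin n) (s : ℝ) :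
    HasDerivAt (fun s : ℝ => hess F (y + s • u) i j)
      (∑ m, u m * fderiv ℝ (fun z => hess F z i j) (y + s • u) (Pi.single m 1)) s := by
  have h := hasDerivAt_comp_line ((hessC1 hF i j).differentiable (by norm_num)) y u s
  rwa [clm_eq_sum] at h

end F

lemma le_of_deriv_nonpos' {f f' : ℝ → ℝ}
    (h : ∀ r ∈ Set.Icc (0:ℝ) 1, HasDerivAt f (f' r) r)
    (h' : ∀ r ∈ Set.Ioo (0:ℝ) 1, f' r ≤ 0)
    {a b : ℝ} (ha : a ∈ Set.Icc (0:ℝ) 1) (hb : b ∈ Set.Icc (0:ℝ) 1) (hab : a ≤ b) :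
    f b ≤ f a := by
  have hanti : AntitoneOn f (Set.Icc (0:ℝ) 1) := by
    apply antitoneOn_of_deriv_nonpos (convex_Icc 0 1)
    · exact fun r hr => (h r hr).continuousAt.continuousWithinAt
    · intro r hr
      rw [interior_Icc] at hr
      exact ((h r (Set.mem_Icc_of_Ioo hr)).differentiableAt).differentiableWithinAt
    · intro r hr
      rw [interior_Icc] at hr
      rw [(h r (Set.mem_Icc_of_Ioo hr)).deriv]
      exact h' r hr
  exact hanti ha hb hab

lemma le_of_deriv_nonneg' {f f' : ℝ → ℝ}
    (h : ∀ r ∈ Set.Icc (0:ℝ) 1, HasDerivAt f (f' r) r)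
    (h' : ∀ r ∈ Set.Ioo (0:ℝ) 1, 0 ≤ f' r)
    {a b : ℝ} (ha : a ∈ Set.Icc (0:ℝ) 1) (hb : b ∈ Set.Icc (0:ℝ) 1) (hab : a ≤ b) :
    f a ≤ f b := by
  have h2 : ∀ r ∈ Set.Icc (0:ℝ) 1, HasDerivAt (fun t => -f t) (-f' r) r :=
    fun r hr => (h r hr).neg
  have := le_of_deriv_nonpos' h2 (fun r hr => neg_nonpos.mpr (h' r hr)) ha hb hab
  linarith

lemma mem_box_segment {n : ℕ} {y u : Fin n → ℝ} (hy : y ∈ box n) (hyu : y + u ∈ box n)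
    {s : ℝ} (hs : s ∈ Set.Icc (0:ℝ) 1) : y + s • u ∈ box n := by
  have : y + s • u = (1 - s) • y + s • (y + u) := by
    ext i; simp [Pi.add_apply, Pi.smul_apply, smul_eq_mul]; ring
  rw [this]
  exact (convex_Icc _ _) hy hyu (by linarith [hs.1, hs.2]) hs.1 (by ring)

/-- Taylor-type bound using nonpositive third derivatives. -/
lemma taylor_bound {n : ℕ} {F : (Fin n → ℝ) → ℝ} (hF : ContDiff ℝ 3 F)
    (hthird : ∀ y ∈ box n, ∀ i j m : Fin n,
      fderiv ℝ (fun z => hess F z i j) y (Pi.single m 1) ≤ 0)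
    {y u : Fin n → ℝ} (hy : y ∈ box n) (hyu : y + u ∈ box n) (hu : 0 ≤ u) :
    F (y + u) ≤ F y + dotp u (grad F y) + (1/2) * quadForm (hess F y) u := by
  set Q0 : ℝ := quadForm (hess F y) u with hQ0
  set D0 : ℝ := dotp u (grad F y) with hD0
  -- Step 1: quadForm along the line is antitone
  have hquad : ∀ r ∈ Set.Icc (0:ℝ) 1, ∀ s ∈ Set.Icc (0:ℝ) 1, r ≤ s →
      quadForm (hess F (y + s • u)) u ≤ quadForm (hess F (y + r • u)) u := by
    intro r hr s hs hrs
    refine le_of_deriv_nonpos' (f := fun s => quadForm (hess F (y + s • u)) u) (f' := fun r =>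
      ∑ i, ∑ j, u i * (∑ m, u m * fderiv ℝ (fun z => hess F z i j) (y + r • u) (Pi.single m 1)) * u j)
      ?_ ?_ hr hs hrs
    · intro r hr
      unfold quadForm
      apply HasDerivAt.fun_sum; intro i _
      apply HasDerivAt.fun_sum; intro j _
      simpa [mul_comm, mul_assoc, mul_left_comm] using
        (((hasDerivAt_hess_line hF y u i j r).const_mul (u i)).mul_const (u j))
    · intro r hr
      apply Finset.sum_nonpos; intro i _
      apply Finset.sum_nonpos; intro j _
      have hmem : y + r • u ∈ box n := mem_box_segment hy hyu (Set.mem_Icc_of_Ioo hr)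
      have hin : ∑ m, u m * fderiv ℝ (fun z => hess F z i j) (y + r • u) (Pi.single m 1) ≤ 0 := by
        apply Finset.sum_nonpos; intro m _
        exact mul_nonpos_of_nonneg_of_nonpos (hu m) (hthird _ hmem i j m)
      have := mul_nonneg (hu i) (hu j)
      nlinarith
  -- Step 2: dotp u (grad F (y + s•u)) ≤ D0 + s * Q0 for s ∈ [0,1]
  have hgradb : ∀ s ∈ Set.Icc (0:ℝ) 1, dotp u (grad F (y + s • u)) ≤ D0 + s * Q0 := by
    intro s hs
    have key : dotp u (grad F (y + s • u)) - s * Q0 ≤ dotp u (grad F (y + (0:ℝ) • u)) - 0 * Q0 := by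
      refine le_of_deriv_nonpos' (f := fun r => dotp u (grad F (y + r • u)) - r * Q0)
        (f' := fun r => quadForm (hess F (y + r • u)) u - Q0) ?_ ?_
        (Set.left_mem_Icc.mpr zero_le_one) hs hs.1
      · intro r hr
        have hsum := HasDerivAt.fun_sum (fun i (_ : i ∈ (Finset.univ : Finset (Fin n))) =>
          ((hasDerivAt_grad_line hF y u i r).const_mul (u i)))
        have hval : quadForm (hess F (y + r • u)) u
            = ∑ i, u i * ∑ j, u j * hess F (y + r • u) i j := by
          unfold quadForm
          refine Finset.sum_congr rfl fun i _ => ?_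
          rw [Finset.mul_sum]
          exact Finset.sum_congr rfl fun j _ => by ring
        have h1 : HasDerivAt (fun r : ℝ => dotp u (grad F (y + r • u)))
            (quadForm (hess F (y + r • u)) u) r := by
          rw [hval]; unfold dotp; exact hsum
        have h2 : HasDerivAt (fun r : ℝ => r * Q0) Q0 r := by
          simpa using (hasDerivAt_id r).mul_const Q0
        exact h1.sub h2
      · intro r hr
        have := hquad 0 (Set.left_mem_Icc.mpr zero_le_one) r (Set.mem_Icc_of_Ioo hr) hr.1.le
        simp only [zero_smul, add_zero] at this
        linarith
    simp only [zero_smul, add_zero, zero_mul, sub_zero] at key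
    linarith [key]
  -- Step 3: integrate once more
  have final : F (y + (1:ℝ) • u) - 1 * D0 - (1:ℝ)^2/2 * Q0 ≤ F (y + (0:ℝ) • u) - 0 * D0 - (0:ℝ)^2/2 * Q0 := by
    refine le_of_deriv_nonpos' (f := fun s => F (y + s • u) - s * D0 - s^2/2 * Q0)
      (f' := fun s => dotp u (grad F (y + s • u)) - D0 - s * Q0) ?_ ?_
      (Set.left_mem_Icc.mpr zero_le_one) (Set.right_mem_Icc.mpr zero_le_one) zero_le_one
    · intro s hs
      have h1 := hasDerivAt_F_line hF y u s
      have h2 : HasDerivAt (fun s : ℝ => s * D0) D0 s := by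
        simpa using (hasDerivAt_id s).mul_const D0
      have h3 : HasDerivAt (fun s : ℝ => s^2/2 * Q0) (s * Q0) s := by
        have := ((hasDerivAt_pow 2 s).div_const 2).mul_const Q0
        simpa using this.congr_deriv (by push_cast; ring)
      simpa using (h1.fun_sub h2).fun_sub h3
    · intro s hs
      have := hgradb s (Set.mem_Icc_of_Ioo hs)
      linarith
  simp only [one_smul, zero_smul, add_zero, one_mul, zero_mul, sub_zero, one_pow] at final
  push_cast at final
  linarith

lemma single_mem_box {n : ℕ} {y : Fin n → ℝ} (hy : y ∈ box n) {i : Fin n} {s : ℝ}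
    (h0 : 0 ≤ y i + s) (h1 : y i + s ≤ 1) : y + s • (Pi.single i 1 : Fin n → ℝ) ∈ box n := by
  constructor <;> intro j <;> by_cases hj : j = i
  · subst hj; simpa using h0
  · simpa [Pi.single_apply, hj] using (hy.1 j)
  · subst hj; simpa using h1
  · simpa [Pi.single_apply, hj] using (hy.2 j)

lemma grad_nonneg {n : ℕ} {F : (Fin n → ℝ) → ℝ} (hF : ContDiff ℝ 3 F)
    (hmono : ∀ y ∈ box n, ∀ z ∈ box n, y ≤ z → F y ≤ F z)
    {y : Fin n → ℝ} (hy : y ∈ box n) (i : Fin n) : 0 ≤ grad F y i := by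
  have hder : HasDerivAt (fun s : ℝ => F (y + s • (Pi.single i 1 : Fin n → ℝ)))
      (dotp (Pi.single i 1) (grad F y)) 0 := by
    simpa using hasDerivAt_F_line hF y (Pi.single i 1) 0
  have hdot : dotp (Pi.single i 1 : Fin n → ℝ) (grad F y) = grad F y i := by
    unfold dotp
    rw [Finset.sum_eq_single i] <;> simp +contextual [Pi.single_apply]
  rw [hdot] at hder
  have hyi0 : 0 ≤ y i := hy.1 i
  have hyi1 : y i ≤ 1 := hy.2 i
  by_cases hlt : y i < 1
  · -- approach from the right
    have h' : HasDerivWithinAt (fun s : ℝ => F (y + s • (Pi.single i 1 : Fin n → ℝ)))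
        (grad F y i) (Set.Ioi 0) 0 := hder.hasDerivWithinAt
    rw [hasDerivWithinAt_iff_tendsto_slope,
      show Set.Ioi (0:ℝ) \ {0} = Set.Ioi 0 from Set.diff_singleton_eq_self (by simp)] at h'
    refine ge_of_tendsto h' ?_
    filter_upwards [self_mem_nhdsWithin,
      inter_mem_nhdsWithin _ (Metric.ball_mem_nhds (0:ℝ) (by linarith : (0:ℝ) < 1 - y i))]
        with s hs hs2
    have hs0 : 0 < s := hs2.1
    have hsb : s < 1 - y i := by
      have := hs2.2
      simp only [Metric.mem_ball, Real.dist_eq, sub_zero] at this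
      calc s ≤ |s| := le_abs_self s
      _ < 1 - y i := this
    have hmem : y + s • (Pi.single i 1 : Fin n → ℝ) ∈ box n :=
      single_mem_box hy (by linarith) (by linarith)
    have hle : F y ≤ F (y + s • (Pi.single i 1 : Fin n → ℝ)) := by
      refine hmono y hy _ hmem fun j => ?_
      by_cases hj : j = i
      · subst hj; simp; positivity
      · simp [Pi.single_apply, hj]
    rw [slope_def_field]
    rw [zero_smul, add_zero, sub_zero]
    exact div_nonneg (by linarith) hs0.le
  · -- y i = 1 : approach from the left
    have hyi : y i = 1 := le_antisymm hyi1 (not_lt.mp hlt)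
    have h' : HasDerivWithinAt (fun s : ℝ => F (y + s • (Pi.single i 1 : Fin n → ℝ)))
        (grad F y i) (Set.Iio 0) 0 := hder.hasDerivWithinAt
    rw [hasDerivWithinAt_iff_tendsto_slope,
      show Set.Iio (0:ℝ) \ {0} = Set.Iio 0 from Set.diff_singleton_eq_self (by simp)] at h'
    refine ge_of_tendsto h' ?_
    filter_upwards [self_mem_nhdsWithin,
      inter_mem_nhdsWithin _ (Metric.ball_mem_nhds (0:ℝ) one_pos)]
        with s hs hs2
    have hs0 : s < 0 := hs2.1
    have hsb : -1 < s := by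
      have := hs2.2
      simp only [Metric.mem_ball, Real.dist_eq, sub_zero] at this
      have h2 : -s ≤ |s| := neg_le_abs s
      linarith
    have hmem : y + s • (Pi.single i 1 : Fin n → ℝ) ∈ box n :=
      single_mem_box hy (by rw [hyi]; linarith) (by rw [hyi]; linarith)
    have hle : F (y + s • (Pi.single i 1 : Fin n → ℝ)) ≤ F y := by
      refine hmono _ hmem y hy fun j => ?_
      by_cases hj : j = i
      · subst hj; simp; nlinarith
      · simp [Pi.single_apply, hj]
    rw [slope_def_field]
    rw [zero_smul, add_zero, sub_zero]
    have hnum : F (y + s • (Pi.single i 1 : Fin n → ℝ)) - F y ≤ 0 := by linarith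
    rw [div_nonneg_iff]
    right
    exact ⟨hnum, hs0.le⟩

/-- Theorem `thirdderiv`: jump-start continuous greedy, non-positive
third-order partials.  Under the hypotheses of Statement 1 together with
non-positivity of all third-order partial derivatives of `F` on `[0,1]^n`,
`x(1) ∈ P` and `F(x(1)) ≥ (1 - exp(-α(1-α)/(α+σ)))·OPT`; in particular for
`α = 1/2`, `F(x(1)) ≥ (1 - exp(-1/(4σ+2)))·OPT ≥ OPT/(4σ+3)`. -/
theorem stmt2 {n : ℕ} (σ α : ℝ) (hσ : 0 ≤ σ) (hα : α ∈ Set.Ico (0 : ℝ) 1)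
    (F : (Fin n → ℝ) → ℝ) (hF : ContDiff ℝ 3 F)
    (hFnn : ∀ y ∈ box n, 0 ≤ F y)
    (hmono : ∀ y ∈ box n, ∀ z ∈ box n, y ≤ z → F y ≤ F z)
    (hOSS : ∀ y ∈ box n, y ≠ 0 → OSSAt σ F y)
    (hthird : ∀ y ∈ box n, ∀ i j m : Fin n,
      fderiv ℝ (fun z => hess F z i j) y (Pi.single m 1) ≤ 0)
    (P : Set (Fin n → ℝ)) (hPbox : P ⊆ box n) (hPconv : Convex ℝ P)
    (hPcomp : IsCompact P)
    (hPdc : ∀ y ∈ P, ∀ z : Fin n → ℝ, 0 ≤ z → z ≤ y → z ∈ P)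
    (vstar : Fin n → ℝ) (hvP : vstar ∈ P) (hvmax : ∀ y ∈ P, l1 y ≤ l1 vstar)
    (xopt : Fin n → ℝ) (hoptP : xopt ∈ P) (hopt : ∀ y ∈ P, F y ≤ F xopt)
    (x v : ℝ → Fin n → ℝ)
    (hx0 : x 0 = α • vstar)
    (hv : ∀ t ∈ Set.Icc (0 : ℝ) 1,
      v t ∈ P ∧ ∀ w ∈ P, dotp w (grad F (x t)) ≤ dotp (v t) (grad F (x t)))
    (hderiv : ∀ t ∈ Set.Icc (0 : ℝ) 1, HasDerivAt x ((1 - α) • v t) t) :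
    x 1 ∈ P ∧
      (1 - Real.exp (-(α * (1 - α) / (α + σ)))) * F xopt ≤ F (x 1) ∧
      (α = 1 / 2 →
        (1 - Real.exp (-(1 / (4 * σ + 2)))) * F xopt ≤ F (x 1) ∧
        F xopt / (4 * σ + 3) ≤ F (x 1)) := by
  obtain ⟨hα0, hα1⟩ := hα
  have h1α : (0:ℝ) < 1 - α := by linarith
  have hvbox := hPbox hvP
  have h0P : (0 : Fin n → ℝ) ∈ P := hPdc vstar hvP 0 le_rfl hvbox.1
  -- x t stays in P
  have hxP : ∀ t ∈ Set.Icc (0:ℝ) 1, x t ∈ P := by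
    intro t ht
    by_contra hxt
    obtain ⟨f, u, hfu, hux⟩ := geometric_hahn_banach_closed_point hPconv hPcomp.isClosed hxt
    have hu0 : 0 < u := by simpa using hfu 0 h0P
    have hD : ∀ s ∈ Set.Icc (0:ℝ) 1, HasDerivAt (fun s => f (x s) - (1-α)*u*s)
        (f ((1-α) • v s) - (1-α)*u) s := by
      intro s hs
      have h1 : HasDerivAt (fun s => f (x s)) (f ((1-α) • v s)) s :=
        (f.hasFDerivAt).comp_hasDerivAt s (hderiv s hs)
      have h2 : HasDerivAt (fun s : ℝ => (1-α)*u*s) ((1-α)*u) s := by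
        simpa using (hasDerivAt_id s).const_mul ((1-α)*u)
      exact h1.sub h2
    have hmono' : f (x t) - (1-α)*u*t ≤ f (x 0) - (1-α)*u*0 := by
      refine le_of_deriv_nonpos' hD ?_ (Set.left_mem_Icc.mpr zero_le_one) ht ht.1
      intro s hs
      have hfv : f (v s) < u := hfu (v s) (hv s (Set.mem_Icc_of_Ioo hs)).1
      have : f ((1-α) • v s) = (1-α) * f (v s) := by
        rw [map_smul, smul_eq_mul]
      rw [this]
      nlinarith
    have hfx0 : f (x 0) = α * f vstar := by rw [hx0, map_smul, smul_eq_mul]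
    have hfvs : f vstar < u := hfu vstar hvP
    have h1 : f (x t) ≤ α * f vstar + (1-α)*u*t := by
      rw [hfx0] at hmono'; linarith
    have hh1 : α * f vstar ≤ α * u := mul_le_mul_of_nonneg_left hfvs.le hα0
    have hh2 : (1-α)*u*t ≤ (1-α)*u*1 :=
      mul_le_mul_of_nonneg_left ht.2 (mul_nonneg h1α.le hu0.le)
    nlinarith [hh1, hh2]
  have hx1P : x 1 ∈ P := hxP 1 (Set.right_mem_Icc.mpr zero_le_one)
  have hbox : ∀ t ∈ Set.Icc (0:ℝ) 1, x t ∈ box n := fun t ht => hPbox (hxP t ht)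
  have hOPTnn : 0 ≤ F xopt := hFnn xopt (hPbox hoptP)
  have hFx1nn : 0 ≤ F (x 1) := hFnn _ (hbox 1 (Set.right_mem_Icc.mpr zero_le_one))
  -- main inequality
  have main : (1 - Real.exp (-(α * (1 - α) / (α + σ)))) * F xopt ≤ F (x 1) := by
    rcases eq_or_lt_of_le hα0 with hA | hA
    · -- α = 0
      have hc : α * (1 - α) / (α + σ) = 0 := by rw [← hA]; simp
      rw [hc]
      simpa using hFx1nn
    have hl1nn : (0:ℝ) ≤ l1 vstar := Finset.sum_nonneg fun i _ => abs_nonneg _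
    rcases eq_or_lt_of_le hl1nn with hL | hL
    · -- l1 vstar = 0 : P = {0}
      have hPzero : ∀ y ∈ P, y = 0 := by
        intro y hy
        have h1 : l1 y ≤ 0 := by
          have := hvmax y hy
          rwa [← hL] at this
        have hnn : ∀ i ∈ Finset.univ, (0:ℝ) ≤ |y i| := fun i _ => abs_nonneg (y i)
        have hsum0 : ∑ i, |y i| = 0 := le_antisymm h1 (Finset.sum_nonneg hnn)
        funext i
        exact abs_eq_zero.mp ((Finset.sum_eq_zero_iff_of_nonneg hnn).mp hsum0 i (Finset.mem_univ i))
      have hx1 : x 1 = 0 := hPzero _ hx1P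
      have hxo : xopt = 0 := hPzero _ hoptP
      rw [hx1, ← hxo]
      nlinarith [Real.exp_pos (-(α * (1 - α) / (α + σ))), hOPTnn]
    -- main case : α > 0, l1 vstar > 0
    set c : ℝ := α * (1 - α) / (α + σ) with hc
    have hασ : 0 < α + σ := by linarith
    have hcpos : 0 < c := by
      rw [hc]; positivity
    -- coordinatewise monotonicity of x
    have hxmono : ∀ i, ∀ s ∈ Set.Icc (0:ℝ) 1, ∀ t ∈ Set.Icc (0:ℝ) 1, s ≤ t → x s i ≤ x t i := by
      intro i s hs t ht hst
      refine le_of_deriv_nonneg' (f := fun t => x t i) (f' := fun t => (1-α) * v t i) ?_ ?_ hs ht hst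
      · intro r hr
        have h := (ContinuousLinearMap.proj (R := ℝ) (φ := fun _ : Fin n => ℝ) i).hasFDerivAt.comp_hasDerivAt r (hderiv r hr)
        exact h
      · intro r hr
        have hvb := hPbox (hv r (Set.mem_Icc_of_Ioo hr)).1
        exact mul_nonneg h1α.le (hvb.1 i)
    -- lower bound on l1 (x t)
    have hl1x : ∀ t ∈ Set.Icc (0:ℝ) 1, α * l1 vstar ≤ l1 (x t) := by
      intro t ht
      have hx0t : ∀ i, α * vstar i ≤ x t i := by
        intro i
        have := hxmono i 0 (Set.left_mem_Icc.mpr zero_le_one) t ht ht.1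
        rwa [hx0] at this
      unfold l1
      rw [Finset.mul_sum]
      refine Finset.sum_le_sum fun i _ => ?_
      have h1 : |vstar i| = vstar i := abs_of_nonneg (hvbox.1 i)
      have h2 := le_abs_self (x t i)
      rw [h1]
      linarith [hx0t i]
    -- key differential inequality
    have key : ∀ t ∈ Set.Icc (0:ℝ) 1,
        c * (F xopt - F (x t)) ≤ (1 - α) * dotp (v t) (grad F (x t)) := by
      intro t ht
      set y := x t with hy
      set g := grad F y with hg
      set u : Fin n → ℝ := fun i => max (xopt i - y i) 0 with hu
      have hybox : y ∈ box n := hbox t ht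
      have hoptbox : xopt ∈ box n := hPbox hoptP
      have hu0 : (0 : Fin n → ℝ) ≤ u := fun i => le_max_right _ _
      have hyusum : ∀ i, (y + u) i = max (xopt i) (y i) := by
        intro i
        simp only [Pi.add_apply, hu]
        rcases le_total (xopt i) (y i) with h | h
        · rw [max_eq_right (by linarith : xopt i - y i ≤ 0), max_eq_right h, add_zero]
        · rw [max_eq_left (by linarith : (0:ℝ) ≤ xopt i - y i), max_eq_left h]; ring
      have hyubox : y + u ∈ box n := by
        constructor <;> intro i <;> rw [hyusum i]
        · exact le_max_of_le_right (hybox.1 i)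
        · exact max_le (hoptbox.2 i) (hybox.2 i)
      have hxole : xopt ≤ y + u := fun i => by rw [hyusum i]; exact le_max_left _ _
      have hFo : F xopt ≤ F (y + u) := hmono xopt hoptbox _ hyubox hxole
      have htaylor := taylor_bound hF hthird hybox hyubox hu0
      have hl1y : α * l1 vstar ≤ l1 y := hl1x t ht
      have hl1ypos : 0 < l1 y := lt_of_lt_of_le (mul_pos hA hL) hl1y
      have hyne : y ≠ 0 := by
        intro h
        rw [h] at hl1ypos
        simp [l1] at hl1ypos
      have hossy := hOSS y hybox hyne u hu0
      have hgnn : ∀ i, 0 ≤ g i := fun i => grad_nonneg hF hmono hybox i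
      have hdotnn : 0 ≤ dotp u g := by
        unfold dotp
        exact Finset.sum_nonneg fun i _ => mul_nonneg (hu0 i) (hgnn i)
      have hl1u : l1 u ≤ l1 vstar := by
        refine le_trans ?_ (hvmax xopt hoptP)
        unfold l1
        refine Finset.sum_le_sum fun i _ => ?_
        rw [abs_of_nonneg (hu0 i), abs_of_nonneg (hoptbox.1 i)]
        have hyi : (0:ℝ) ≤ y i := hybox.1 i
        have hoi : (0:ℝ) ≤ xopt i := hoptbox.1 i
        simp only [hu]
        rcases le_total (xopt i - y i) 0 with h | h
        · rw [max_eq_right h]; exact hoi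
        · rw [max_eq_left h]; linarith
      have hratio : l1 u / l1 y ≤ 1 / α := by
        rw [div_le_div_iff₀ hl1ypos hA]
        calc l1 u * α ≤ l1 vstar * α := by nlinarith
        _ ≤ 1 * l1 y := by nlinarith
      have hoss2 : σ * (l1 u / l1 y) * dotp u g ≤ σ * (1/α) * dotp u g := by
        apply mul_le_mul_of_nonneg_right _ hdotnn
        apply mul_le_mul_of_nonneg_left hratio hσ
      have hdole : dotp u g ≤ dotp xopt g := by
        unfold dotp
        refine Finset.sum_le_sum fun i _ => ?_
        apply mul_le_mul_of_nonneg_right _ (hgnn i)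
        have hyi : (0:ℝ) ≤ y i := hybox.1 i
        have hoi : (0:ℝ) ≤ xopt i := hoptbox.1 i
        simp only [hu]
        rcases le_total (xopt i - y i) 0 with h | h
        · rw [max_eq_right h]; exact hoi
        · rw [max_eq_left h]; linarith
      have hdov : dotp xopt g ≤ dotp (v t) g := (hv t ht).2 xopt hoptP
      -- combine
      have hcomb : F xopt - F y ≤ (1 + σ/α) * dotp (v t) g := by
        have h1 : F xopt ≤ F y + dotp u g + σ * (1/α) * dotp u g := by
          calc F xopt ≤ F (y + u) := hFo
          _ ≤ F y + dotp u g + (1/2) * quadForm (hess F y) u := htaylor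
          _ ≤ F y + dotp u g + σ * (l1 u / l1 y) * dotp u g := by linarith [hossy]
          _ ≤ F y + dotp u g + σ * (1/α) * dotp u g := by linarith [hoss2]
        have h2 : dotp u g ≤ dotp (v t) g := le_trans hdole hdov
        have h3 : 0 ≤ 1 + σ/α := by positivity
        have e1 : dotp u g + σ * (1/α) * dotp u g = (1 + σ/α) * dotp u g := by ring
        have h5 := mul_le_mul_of_nonneg_left h2 h3
        linarith
      have hceq : c * (1 + σ/α) = 1 - α := by
        rw [hc]; field_simp
      calc c * (F xopt - F y) ≤ c * ((1 + σ/α) * dotp (v t) g) :=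
            mul_le_mul_of_nonneg_left hcomb hcpos.le
      _ = (1-α) * dotp (v t) g := by rw [← mul_assoc, hceq]
    -- Gronwall
    have hG : Real.exp (c*0) * (F (x 0) - F xopt) ≤ Real.exp (c*1) * (F (x 1) - F xopt) := by
      refine le_of_deriv_nonneg' (f := fun t => Real.exp (c*t) * (F (x t) - F xopt))
        (f' := fun t => c * Real.exp (c*t) * (F (x t) - F xopt)
          + Real.exp (c*t) * ((1-α) * dotp (v t) (grad F (x t)))) ?_ ?_
        (Set.left_mem_Icc.mpr zero_le_one) (Set.right_mem_Icc.mpr zero_le_one) zero_le_one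
      · intro t ht
        have he : HasDerivAt (fun t : ℝ => Real.exp (c*t)) (c * Real.exp (c*t)) t := by
          have h1 : HasDerivAt (fun t : ℝ => c * t) c t := by
            simpa using (hasDerivAt_id t).const_mul c
          simpa [mul_comm] using h1.exp
        have hFx : HasDerivAt (fun t => F (x t) - F xopt)
            ((1-α) * dotp (v t) (grad F (x t))) t := by
          have h := ((hF.differentiable (by norm_num)) (x t)).hasFDerivAt.comp_hasDerivAt t (hderiv t ht)
          have hval : fderiv ℝ F (x t) ((1-α) • v t) = (1-α) * dotp (v t) (grad F (x t)) := by
            rw [map_smul, smul_eq_mul, clm_eq_sum]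
            rfl
          rw [hval] at h
          exact h.sub_const (F xopt)
        exact he.mul hFx
      · intro t ht
        have hk := key t (Set.mem_Icc_of_Ioo ht)
        have hE := Real.exp_pos (c*t)
        nlinarith [mul_le_mul_of_nonneg_left hk hE.le]
    have hFx0 : 0 ≤ F (x 0) := hFnn _ (hbox 0 (Set.left_mem_Icc.mpr zero_le_one))
    have hE := Real.exp_pos c
    rw [mul_zero, Real.exp_zero, one_mul, mul_one] at hG
    have hEinv : Real.exp (-c) = (Real.exp c)⁻¹ := Real.exp_neg c
    rw [hEinv]
    have h8 : (Real.exp c)⁻¹ * (Real.exp c * (F (x 1) - F xopt)) = F (x 1) - F xopt := by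
      rw [← mul_assoc, inv_mul_cancel₀ (ne_of_gt hE), one_mul]
    have h9 := mul_le_mul_of_nonneg_left hG (inv_nonneg.mpr hE.le)
    rw [h8] at h9
    nlinarith [mul_nonneg (inv_nonneg.mpr hE.le) hFx0, inv_nonneg.mpr hE.le]
  refine ⟨hx1P, main, fun hhalf => ?_⟩
  have hceq : α * (1 - α) / (α + σ) = 1 / (4*σ + 2) := by
    have hne1 : (1/2 + σ : ℝ) ≠ 0 := by positivity
    have hne2 : (4*σ + 2 : ℝ) ≠ 0 := by positivity
    rw [hhalf]
    field_simp
    ring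
  rw [hceq] at main
  refine ⟨main, ?_⟩
  have h2 : (0:ℝ) < 4*σ+2 := by linarith
  have h3 : (0:ℝ) < 4*σ+3 := by linarith
  have hexp : Real.exp (-(1/(4*σ+2))) ≤ (4*σ+2)/(4*σ+3) := by
    rw [Real.exp_neg]
    have h4 := Real.add_one_le_exp (1/(4*σ+2))
    have h5 : (0:ℝ) < 1/(4*σ+2) + 1 := by positivity
    have h6 : (Real.exp (1/(4*σ+2)))⁻¹ ≤ (1/(4*σ+2) + 1)⁻¹ := by
      apply inv_anti₀ h5
      linarith
    calc (Real.exp (1/(4*σ+2)))⁻¹ ≤ (1/(4*σ+2) + 1)⁻¹ := h6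
    _ = (4*σ+2)/(4*σ+3) := by
        have he2 : 1/(4*σ+2) + 1 = (4*σ+3)/(4*σ+2) := by
          field_simp
          ring
        rw [he2, inv_div]
  have h7 : 1/(4*σ+3) ≤ 1 - Real.exp (-(1/(4*σ+2))) := by
    have heq : 1 - (4*σ+2)/(4*σ+3) = 1/(4*σ+3) := by
      field_simp
      ring
    linarith
  calc F xopt/(4*σ+3) = (1/(4*σ+3)) * F xopt := by ring
  _ ≤ (1 - Real.exp (-(1/(4*σ+2)))) * F xopt := mul_le_mul_of_nonneg_right h7 hOPTnn
  _ ≤ F (x 1) := main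
end

section
/- Let F : [0,1]^n → ℝ be a monotone, non-negative C² function and P ⊆ [0,1]^n a downward-closed compact convex polytope with v* ∈ argmax_{x∈P} ‖x‖₁, OPT = max_{x∈P} F(x), and α ∈ (0,1). Assume: (i) there is μ ∈ (0,1] such that for every x ∈ P with x ≥ α·v*, max_{v∈P} vᵀ∇F(x) ≥ μ·(OPT − F(x)); and (ii) there is β ∈ (0,1] such that uᵀ∇F(x + εu) ≥ β·uᵀ∇F(x) for all u, x ∈ P and ε ∈ [0,1] with x + εu ∈ P. Then the one-step iterate x¹ = α·v* + (1−α)·v_max(α·v*), where v_max(x) ∈ argmax_{v∈P} vᵀ∇F(x), satisfies F(x¹) ≥ (1 − exp(−β(1−α)μ))·OPT. -/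
open scoped BigOperators

lemma clm_apply_eq_sum {n : ℕ} (L : (Fin n → ℝ) →L[ℝ] ℝ) (v : Fin n → ℝ) :
    L v = ∑ i, v i * L (Pi.single i 1) := by
  conv_lhs => rw [← Finset.univ_sum_single v]
  rw [map_sum]
  refine Finset.sum_congr rfl fun i _ => ?_
  have h : (Pi.single i (v i) : Fin n → ℝ) = v i • (Pi.single i 1 : Fin n → ℝ) := by
    funext j
    by_cases hj : j = i <;> simp [Pi.single_apply, hj]
  rw [h, map_smul, smul_eq_mul]

/-- Theorem `discretizebetageneral`: one-step discrete greedy.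
`F : [0,1]^n → ℝ` monotone, non-negative, C²; `P ⊆ [0,1]^n` downward-closed compact
convex; `v* ∈ argmax_{x∈P} ‖x‖₁`; `OPT = max_{x∈P} F`; `α ∈ (0,1)`;
(i) `μ ∈ (0,1]` with `max_{v∈P} vᵀ∇F(x) ≥ μ(OPT - F x)` whenever `x ∈ P`,
`x ≥ α v*`; (ii) `β ∈ (0,1]` with `uᵀ∇F(x+εu) ≥ β·uᵀ∇F(x)` for all `u, x ∈ P`,
`ε ∈ [0,1]` with `x+εu ∈ P`.  Then the one-step iterate
`x¹ = α v* + (1-α)·v_max(α v*)` satisfies `F(x¹) ≥ (1 - exp(-β(1-α)μ))·OPT`. -/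
theorem stmt7 {n : ℕ} (α μ β : ℝ)
    (hα : α ∈ Set.Ioo (0 : ℝ) 1) (hμ : μ ∈ Set.Ioc (0 : ℝ) 1)
    (hβ : β ∈ Set.Ioc (0 : ℝ) 1)
    (F : (Fin n → ℝ) → ℝ) (hF : ContDiff ℝ 2 F)
    (hFnn : ∀ y ∈ box n, 0 ≤ F y)
    (hmono : ∀ y ∈ box n, ∀ z ∈ box n, y ≤ z → F y ≤ F z)
    (P : Set (Fin n → ℝ)) (hPbox : P ⊆ box n) (hPconv : Convex ℝ P)
    (hPcomp : IsCompact P)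
    (hPdc : ∀ y ∈ P, ∀ z : Fin n → ℝ, 0 ≤ z → z ≤ y → z ∈ P)
    (vstar : Fin n → ℝ) (hvP : vstar ∈ P) (hvmax : ∀ y ∈ P, l1 y ≤ l1 vstar)
    (xopt : Fin n → ℝ) (hoptP : xopt ∈ P) (hopt : ∀ y ∈ P, F y ≤ F xopt)
    (hmu : ∀ x ∈ P, α • vstar ≤ x → ∃ v ∈ P, μ * (F xopt - F x) ≤ dotp v (grad F x))
    (hbeta : ∀ u ∈ P, ∀ x ∈ P, ∀ ε ∈ Set.Icc (0 : ℝ) 1, x + ε • u ∈ P →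
      β * dotp u (grad F x) ≤ dotp u (grad F (x + ε • u)))
    (v1 : Fin n → ℝ) (hv1P : v1 ∈ P)
    (hv1 : ∀ w ∈ P, dotp w (grad F (α • vstar)) ≤ dotp v1 (grad F (α • vstar))) :
    (1 - Real.exp (-(β * (1 - α) * μ))) * F xopt ≤ F (α • vstar + (1 - α) • v1) := by
  obtain ⟨hα0, hα1⟩ := hα
  set x0 : Fin n → ℝ := α • vstar with hx0def
  have hv0 : (0 : Fin n → ℝ) ≤ vstar := (hPbox hvP).1
  have hv10 : (0 : Fin n → ℝ) ≤ v1 := (hPbox hv1P).1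
  have hx0nn : (0 : Fin n → ℝ) ≤ x0 := by
    intro i
    simpa [hx0def] using mul_nonneg hα0.le (hv0 i)
  have hx0le : x0 ≤ vstar := by
    intro i
    simpa [hx0def] using mul_le_of_le_one_left (hv0 i) hα1.le
  have hx0P : x0 ∈ P := hPdc vstar hvP x0 hx0nn hx0le
  have h0P : (0 : Fin n → ℝ) ∈ P := hPdc vstar hvP 0 le_rfl hv0
  -- points on the segment stay in P
  have hxtP : ∀ t ∈ Set.Icc (0:ℝ) (1-α), x0 + t • v1 ∈ P := by
    intro t ht
    have hs : 0 < α + t := by linarith [ht.1]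
    have hs1 : α + t ≤ 1 := by linarith [ht.2]
    have hz : (α/(α+t)) • vstar + (t/(α+t)) • v1 ∈ P :=
      hPconv hvP hv1P (div_nonneg hα0.le hs.le) (div_nonneg ht.1 hs.le) (by field_simp)
    have h2 : (α+t) • ((α/(α+t)) • vstar + (t/(α+t)) • v1) + (1-(α+t)) • (0 : Fin n → ℝ) ∈ P :=
      hPconv hz h0P hs.le (by linarith) (by ring)
    have he : (α+t) • ((α/(α+t)) • vstar + (t/(α+t)) • v1) + (1-(α+t)) • (0 : Fin n → ℝ)
        = x0 + t • v1 := by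
      funext i
      simp only [hx0def, Pi.add_apply, Pi.smul_apply, smul_eq_mul, Pi.zero_apply, mul_zero, add_zero, mul_add]
      field_simp
    rwa [he] at h2
  -- derivative facts
  have hFd : Differentiable ℝ F := hF.differentiable (by norm_num)
  have key : ∀ x v : Fin n → ℝ, dotp v (grad F x) = (fderiv ℝ F x) v := by
    intro x v
    simp only [dotp, grad]
    exact (clm_apply_eq_sum (fderiv ℝ F x) v).symm
  have hgd : ∀ t : ℝ, HasDerivAt (fun ε : ℝ => F (x0 + ε • v1))
      (dotp v1 (grad F (x0 + t • v1))) t := by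
    intro t
    have h1 : HasDerivAt (fun ε : ℝ => x0 + ε • v1) v1 t := by
      simpa using ((hasDerivAt_id t).smul_const v1).const_add x0
    have h2 := (hFd (x0 + t • v1)).hasFDerivAt.comp_hasDerivAt t h1
    rw [key]
    exact h2
  -- lower bound on the derivative
  obtain ⟨v, hvP', hvm⟩ := hmu x0 hx0P le_rfl
  set m : ℝ := β * (μ * (F xopt - F x0)) with hmdef
  have hm0 : m ≤ β * dotp v1 (grad F x0) :=
    mul_le_mul_of_nonneg_left (hvm.trans (hv1 v hvP')) hβ.1.le
  have hderiv_ge : ∀ t ∈ Set.Icc (0:ℝ) (1-α), m ≤ dotp v1 (grad F (x0 + t • v1)) := by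
    intro t ht
    exact hm0.trans (hbeta v1 hv1P x0 hx0P t ⟨ht.1, by linarith [ht.2]⟩ (hxtP t ht))
  -- monotone function h t = F(x0 + t v1) - m t
  have hh : ∀ t : ℝ, HasDerivAt (fun s : ℝ => F (x0 + s • v1) - m * s)
      (dotp v1 (grad F (x0 + t • v1)) - m) t := by
    intro t
    have := (hgd t).sub (by simpa using (hasDerivAt_id t).const_mul m)
    exact this
  have hmonoh : MonotoneOn (fun s : ℝ => F (x0 + s • v1) - m * s) (Set.Icc 0 (1-α)) := by
    apply monotoneOn_of_deriv_nonneg (convex_Icc _ _)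
    · exact (continuous_iff_continuousAt.2 fun t => (hh t).continuousAt).continuousOn
    · intro t _
      exact (hh t).differentiableAt.differentiableWithinAt
    · intro t ht
      rw [interior_Icc] at ht
      rw [(hh t).deriv]
      have := hderiv_ge t ⟨ht.1.le, ht.2.le⟩
      linarith
  have hfin : F x0 + m * (1-α) ≤ F (x0 + (1-α) • v1) := by
    have h01 : (0:ℝ) ∈ Set.Icc (0:ℝ) (1-α) := ⟨le_rfl, by linarith⟩
    have h02 : (1-α) ∈ Set.Icc (0:ℝ) (1-α) := ⟨by linarith, le_rfl⟩
    have := hmonoh h01 h02 (by linarith)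
    simp only [zero_smul, add_zero, mul_zero, sub_zero] at this
    linarith
  -- final arithmetic
  have hOPT : 0 ≤ F xopt := hFnn xopt (hPbox hoptP)
  have hFx0 : 0 ≤ F x0 := hFnn x0 (hPbox hx0P)
  have hexp : 1 - Real.exp (-(β * (1 - α) * μ)) ≤ β * (1 - α) * μ := by
    have := Real.add_one_le_exp (-(β * (1 - α) * μ))
    linarith
  have hc1 : β * (1 - α) * μ ≤ 1 := by
    have h1 : β * (1 - α) ≤ 1 := mul_le_one₀ hβ.2 (by linarith) (by linarith)
    have h2 : 0 ≤ β * (1 - α) := mul_nonneg hβ.1.le (by linarith)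
    calc β * (1 - α) * μ ≤ 1 * 1 := mul_le_mul h1 hμ.2 hμ.1.le (by norm_num)
      _ = 1 := one_mul 1
  have step1 : (1 - Real.exp (-(β * (1 - α) * μ))) * F xopt ≤ (β * (1 - α) * μ) * F xopt :=
    mul_le_mul_of_nonneg_right hexp hOPT
  have step2 : (β * (1 - α) * μ) * F xopt ≤ F x0 + m * (1-α) := by
    have hprod : 0 ≤ F x0 * (1 - β * (1 - α) * μ) := mul_nonneg hFx0 (by linarith)
    rw [hmdef]
    nlinarith [hprod]
  calc (1 - Real.exp (-(β * (1 - α) * μ))) * F xopt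
      ≤ F x0 + m * (1-α) := step1.trans step2
    _ ≤ F (x0 + (1-α) • v1) := hfin
end
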